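/- For a positive integer k, setting n = 2k+1, and 0 < x < 1, we have ₂F₁(1, n - 1/2; (n+1)/2; x) = ((n-1)/(2(1-x)^{k+1/2} x^k)) · Σ_{j=0}^{k-1} (-1)^j C(k-1, j) (1 - (1-x)^{j+k+1/2}) / (j + k + 1/2). -/

import Mathlib

/-!
For `a > 0`, `F = ₂F₁(1, k + 1 + a; k + 2; ·)` satisfies the first-order equation
`y (1 - y) F' + (k + 1 - (k + 1 + a) y) F = k + 1`, which says exactly that
`y ^ (k + 1) (1 - y) ^ a F(y)` has derivative `(k + 1) y ^ k (1 - y) ^ (a - 1)`: it is an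
incomplete beta integral. Expanding `y ^ k = (1 - (1 - y)) ^ k` binomially and integrating term
by term gives the finite sum; both sides vanish at `0`. The theorem is the case `a = k + 1/2`
(with `k + 1` for `k`).
-/

open Finset

/-- The Gauss hypergeometric function `₂F₁(a,b;c;x)`. -/
noncomputable def gaussHypergeom (a b c x : ℝ) : ℝ :=
  ∑' k : ℕ, (ascPochhammer ℝ k).eval a * (ascPochhammer ℝ k).eval b /
      (ascPochhammer ℝ k).eval c * x ^ k / (Nat.factorial k)

open Filter Topology

noncomputable def pochhammerRatio (b c : ℝ) (m : ℕ) : ℝ :=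
  (ascPochhammer ℝ m).eval b / (ascPochhammer ℝ m).eval c

lemma gaussHypergeom_one (b c x : ℝ) :
    gaussHypergeom 1 b c x = ∑' m : ℕ, pochhammerRatio b c m * x ^ m := by
  refine tsum_congr fun m => ?_
  have : (m.factorial : ℝ) ≠ 0 := by positivity
  rw [ascPochhammer_eval_one, pochhammerRatio]
  field_simp

section

variable {b c : ℝ}

@[simp] lemma pochhammerRatio_zero : pochhammerRatio b c 0 = 1 := by
  simp [pochhammerRatio]

lemma pochhammerRatio_succ (m : ℕ) :
    pochhammerRatio b c (m + 1) = pochhammerRatio b c m * ((b + m) / (c + m)) := by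
  rw [pochhammerRatio, pochhammerRatio, ascPochhammer_succ_eval, ascPochhammer_succ_eval,
    div_mul_div_comm]

lemma pochhammerRatio_pos (hb : 0 < b) (hc : 0 < c) (m : ℕ) : 0 < pochhammerRatio b c m :=
  div_pos (ascPochhammer_pos _ _ hb) (ascPochhammer_pos _ _ hc)

lemma summable_pow_mul_pochhammerRatio_mul_pow (hb : 0 < b) (hc : 0 < c) (j : ℕ) {s : ℝ}
    (hs0 : 0 ≤ s) (hs1 : s < 1) :
    Summable fun m : ℕ => (m : ℝ) ^ j * pochhammerRatio b c m * s ^ m := by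
  rcases hs0.eq_or_lt with rfl | hs0
  · refine summable_of_ne_finset_zero (s := {0}) fun m hm => ?_
    simp [zero_pow (Finset.notMem_singleton.1 hm)]
  have hratio : Tendsto (fun m : ℕ => ((1 + 1 * m) / (0 + 1 * m)) ^ j *
      ((b + 1 * m) / (c + 1 * m)) * s) atTop (𝓝 ((1 / 1) ^ j * (1 / 1) * s)) :=
    (((tendsto_add_mul_div_add_mul_atTop_nhds 1 0 1 one_ne_zero).pow j).mul
      (tendsto_add_mul_div_add_mul_atTop_nhds b c 1 one_ne_zero)).mul_const s
  simp only [one_mul, zero_add, div_one, one_pow] at hratio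
  refine summable_of_ratio_test_tendsto_lt_one hs1 ?_ (hratio.congr' ?_)
  all_goals filter_upwards [eventually_gt_atTop 0] with m hm
  · have := pochhammerRatio_pos hb hc m
    have : (m : ℝ) ≠ 0 := by exact_mod_cast hm.ne'
    positivity
  · have := pochhammerRatio_pos hb hc m
    have : (0 : ℝ) < m := by exact_mod_cast hm
    have hf (n : ℕ) : 0 ≤ (n : ℝ) ^ j * pochhammerRatio b c n * s ^ n := by
      have := pochhammerRatio_pos hb hc n
      positivity
    rw [Real.norm_of_nonneg (hf _), Real.norm_of_nonneg (hf _), pochhammerRatio_succ]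
    push_cast
    rw [div_pow]
    field_simp
    ring

lemma hasDerivAt_gaussHypergeom_one (hb : 0 < b) (hc : 0 < c) {y : ℝ} (hy : |y| < 1) :
    HasDerivAt (gaussHypergeom 1 b c)
      (∑' m : ℕ, pochhammerRatio b c m * (m * y ^ (m - 1))) y := by
  obtain ⟨r, hyr, hr1⟩ := exists_between hy
  have hr0 : 0 < r := (abs_nonneg y).trans_lt hyr
  have hu : Summable fun m : ℕ => m * pochhammerRatio b c m * r ^ m / r := by
    simpa using (summable_pow_mul_pochhammerRatio_mul_pow hb hc 1 hr0.le hr1).div_const r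
  rw [show gaussHypergeom 1 b c = fun z => ∑' m : ℕ, pochhammerRatio b c m * z ^ m from
    funext (gaussHypergeom_one b c)]
  refine hasDerivAt_tsum_of_isPreconnected hu isOpen_Ioo (convex_Ioo (-r) r).isPreconnected
    (fun m z _ => (hasDerivAt_pow m z).const_mul _) (fun m z hz => ?_)
    (y₀ := 0) (by simp [hr0])
    (by simpa using summable_pow_mul_pochhammerRatio_mul_pow hb hc 0 le_rfl one_pos) (abs_lt.1 hyr)
  have hzr : |z| ≤ r := abs_le.2 ⟨hz.1.le, hz.2.le⟩
  have := (pochhammerRatio_pos hb hc m).le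
  rcases m with _ | m
  · simp
  rw [Real.norm_eq_abs, abs_mul, abs_mul, abs_of_nonneg this, Nat.abs_cast, abs_pow, pow_succ,
    Nat.add_sub_cancel, mul_div_assoc, mul_div_cancel_right₀ _ hr0.ne']
  have : |z| ^ m ≤ r ^ m := pow_le_pow_left₀ (abs_nonneg z) hzr m
  calc _ ≤ pochhammerRatio b c (m + 1) * ((m + 1 : ℕ) * r ^ m) := by gcongr
    _ = _ := by ring

lemma tsum_add_mul_pochhammerRatio_mul_pow (hb : 0 < b) (hc : 0 < c) (d : ℝ) {y : ℝ}
    (hy0 : 0 ≤ y) (hy1 : y < 1) :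
    ∑' m : ℕ, (m + d) * pochhammerRatio b c m * y ^ m =
      ∑' m : ℕ, m * pochhammerRatio b c m * y ^ m + d * gaussHypergeom 1 b c y := by
  have hS := summable_pow_mul_pochhammerRatio_mul_pow hb hc 0 hy0 hy1
  have hM := summable_pow_mul_pochhammerRatio_mul_pow hb hc 1 hy0 hy1
  simp only [pow_zero, one_mul, pow_one] at hS hM
  rw [gaussHypergeom_one, ← tsum_mul_left, ← hM.tsum_add (hS.mul_left d)]
  exact tsum_congr fun m => by ring

lemma gaussHypergeom_one_ode (hb : 0 < b) (hc : 0 < c) {y : ℝ} (hy0 : 0 ≤ y) (hy1 : y < 1) :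
    y * (1 - y) * (∑' m : ℕ, pochhammerRatio b c m * (m * y ^ (m - 1))) +
      (c - 1 - b * y) * gaussHypergeom 1 b c y = c - 1 := by
  have hyD : y * ∑' m : ℕ, pochhammerRatio b c m * (m * y ^ (m - 1)) =
      ∑' m : ℕ, m * pochhammerRatio b c m * y ^ m := by
    rw [← tsum_mul_left]
    refine tsum_congr fun m => ?_
    rcases m with _ | m
    · simp
    · rw [Nat.add_sub_cancel, pow_succ]
      ring
  have hshift : ∑' m : ℕ, (m + (c - 1)) * pochhammerRatio b c m * y ^ m =
      c - 1 + y * ∑' m : ℕ, (m + b) * pochhammerRatio b c m * y ^ m := by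
    have hsum : Summable fun m : ℕ => (m + (c - 1)) * pochhammerRatio b c m * y ^ m := by
      have hS := summable_pow_mul_pochhammerRatio_mul_pow hb hc 0 hy0 hy1
      have hM := summable_pow_mul_pochhammerRatio_mul_pow hb hc 1 hy0 hy1
      exact (hM.add (hS.mul_left (c - 1))).congr fun m => by ring
    rw [hsum.tsum_eq_zero_add, ← tsum_mul_left]
    congr 1
    · simp
    refine tsum_congr fun m => ?_
    have : c + m ≠ 0 := by positivity
    rw [pochhammerRatio_succ]
    push_cast
    field_simp
    ring
  rw [tsum_add_mul_pochhammerRatio_mul_pow hb hc _ hy0 hy1,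
    tsum_add_mul_pochhammerRatio_mul_pow hb hc _ hy0 hy1] at hshift
  linear_combination hshift + (1 - y) * hyD

end

lemma hasDerivAt_pow_mul_rpow_mul_gaussHypergeom_one (k : ℕ) {a : ℝ} (ha : 0 < a) {y : ℝ}
    (hy0 : 0 ≤ y) (hy1 : y < 1) :
    HasDerivAt (fun z => z ^ (k + 1) * (1 - z) ^ a * gaussHypergeom 1 (k + 1 + a) (k + 2) z)
      ((k + 1) * y ^ k * (1 - y) ^ (a - 1)) y := by
  have hb : (0 : ℝ) < k + 1 + a := by positivity
  have hc : (0 : ℝ) < k + 2 := by positivity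
  have hy : 0 < 1 - y := by linarith
  have hF := hasDerivAt_gaussHypergeom_one hb hc (abs_lt.2 ⟨by linarith, hy1⟩)
  have hW : HasDerivAt (fun z : ℝ => (1 - z) ^ a) (-(a * (1 - y) ^ (a - 1))) y := by
    simpa using ((hasDerivAt_id y).const_sub 1).rpow_const (p := a) (Or.inl hy.ne')
  refine (((hasDerivAt_pow (k + 1) y).mul hW).mul hF).congr_deriv ?_
  have hode := gaussHypergeom_one_ode hb hc hy0 hy1
  simp only [Pi.mul_apply]
  rw [show (1 - y) ^ a = (1 - y) * (1 - y) ^ (a - 1) by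
    rw [← Real.rpow_one_add' hy.le (by linarith)]; ring_nf]
  push_cast at hode ⊢
  linear_combination y ^ k * (1 - y) ^ (a - 1) * hode

lemma hasDerivAt_sum_choose_mul_one_sub_rpow (k : ℕ) {a : ℝ} (ha : 0 < a) {y : ℝ}
    (hy1 : y < 1) :
    HasDerivAt (fun z => ∑ j ∈ range (k + 1),
        (-1) ^ j * k.choose j * (1 - (1 - z) ^ (j + a)) / (j + a))
      (y ^ k * (1 - y) ^ (a - 1)) y := by
  have hy : 0 < 1 - y := by linarith
  have hterm (j : ℕ) : HasDerivAt
      (fun z : ℝ => (-1) ^ j * k.choose j * (1 - (1 - z) ^ (j + a)) / (j + a))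
      ((-1) ^ j * k.choose j * (1 - y) ^ j * (1 - y) ^ (a - 1)) y := by
    have hja : (j : ℝ) + a ≠ 0 := by positivity
    refine ((((((hasDerivAt_id y).const_sub 1).rpow_const (p := j + a)
      (Or.inl hy.ne')).const_sub 1).const_mul ((-1) ^ j * k.choose j : ℝ)).div_const
      (j + a)).congr_deriv ?_
    simp only [id, add_sub_assoc, Real.rpow_add hy, Real.rpow_natCast]
    field_simp
  have hbinom : ∑ j ∈ range (k + 1), (-1 : ℝ) ^ j * k.choose j * (1 - y) ^ j = y ^ k := by
    have := add_pow (-(1 - y)) 1 k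
    rw [show -(1 - y) + 1 = y by ring] at this
    rw [this]
    refine sum_congr rfl fun j _ => ?_
    rw [neg_pow (1 - y)]
    ring
  refine (HasDerivAt.fun_sum fun j _ => hterm j).congr_deriv ?_
  rw [← sum_mul, hbinom]

theorem pow_mul_rpow_mul_gaussHypergeom_one_eq_sum (k : ℕ) {a : ℝ} (ha : 0 < a) {x : ℝ}
    (hx0 : 0 ≤ x) (hx1 : x < 1) :
    x ^ (k + 1) * (1 - x) ^ a * gaussHypergeom 1 (k + 1 + a) (k + 2) x =
      (k + 1) * ∑ j ∈ range (k + 1),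
        (-1) ^ j * k.choose j * (1 - (1 - x) ^ (j + a)) / (j + a) := by
  have hlhs (y : ℝ) (hy : y ∈ Set.Icc 0 x) :=
    hasDerivAt_pow_mul_rpow_mul_gaussHypergeom_one k ha hy.1 (hy.2.trans_lt hx1)
  have hrhs (y : ℝ) (hy : y ∈ Set.Icc 0 x) :=
    (hasDerivAt_sum_choose_mul_one_sub_rpow k ha (hy.2.trans_lt hx1)).const_mul ((k : ℝ) + 1)
  refine eq_of_has_deriv_right_eq (a := 0) (b := x)
    (fun y hy => (hlhs y (Set.Ico_subset_Icc_self hy)).hasDerivWithinAt)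
    (fun y hy => ((hrhs y (Set.Ico_subset_Icc_self hy)).congr_deriv
      (mul_assoc _ _ _).symm).hasDerivWithinAt)
    (fun y hy => (hlhs y hy).continuousAt.continuousWithinAt)
    (fun y hy => (hrhs y hy).continuousAt.continuousWithinAt) ?_ x ⟨hx0, le_rfl⟩
  simp

/-- For a positive integer `k`, with `n = 2k+1`, and `0 < x < 1`,
`₂F₁(1, n-1/2; (n+1)/2; x)
  = ((n-1)/(2(1-x)^(k+1/2) x^k)) ∑_{j=0}^{k-1} (-1)^j C(k-1,j)(1-(1-x)^(j+k+1/2))/(j+k+1/2)`. -/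
theorem gaussHypergeom_odd (k n : ℕ) (hk : 0 < k) (hn : n = 2 * k + 1) (x : ℝ)
    (hx0 : 0 < x) (hx1 : x < 1) :
    gaussHypergeom 1 ((n : ℝ) - 1/2) (((n : ℝ) + 1) / 2) x =
      ((n : ℝ) - 1) / (2 * (1 - x) ^ ((k : ℝ) + 1/2) * x ^ k) *
        ∑ j ∈ range k,
          (-1) ^ j * (k - 1).choose j * (1 - (1 - x) ^ ((j : ℝ) + k + 1/2)) /
            ((j : ℝ) + k + 1/2) := by
  obtain ⟨k, rfl⟩ := Nat.exists_eq_add_one_of_ne_zero hk.ne'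
  subst hn
  have key := pow_mul_rpow_mul_gaussHypergeom_one_eq_sum k (a := k + 1 + 1/2) (by positivity)
    hx0.le hx1
  rw [show ((2 * (k + 1) + 1 : ℕ) : ℝ) - 1/2 = k + 1 + (k + 1 + 1/2) by push_cast; ring,
    show (((2 * (k + 1) + 1 : ℕ) : ℝ) + 1) / 2 = k + 2 by push_cast; ring]
  simp only [Nat.add_sub_cancel, Nat.cast_add, Nat.cast_mul, Nat.cast_ofNat, Nat.cast_one,
    ← add_assoc] at key ⊢
  rw [div_mul_eq_mul_div, eq_div_iff (by positivity)]
  linear_combination 2 * key
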